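/- arXiv:2510.15593 — 4 statements merged into one kernel-verified Lean document; each statement's English description precedes it below -/
import Mathlib

section
/- Let G be a finite simple graph, e = {u,v} a bridge of G, and e' = {x,y} an edge not in G (with e' ≠ e). The edge e is a non-bridge in the graph G + e' (G with e' added) if and only if e' crosses the reachability partition of e, i.e., exactly one endpoint of e' lies in Comp(u,e). -/
/-!
Removing `e` from `G + e'` leaves `(G - e) + e'`, and in a graph `H + {x, y}` a vertex `a` reaches
`b` exactly when it does in `H`, or `a` reaches one endpoint of the new edge in `H` and the other
endpoint reaches `b`. As `u` and `v` are separated in `G - e`, only the second possibility can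
reconnect them.
-/

namespace SimpleGraph

variable {V : Type*} {H : SimpleGraph V} {a b u v x y : V}

lemma reachable_sup_edge : (H ⊔ edge x y).Reachable x y := by
  obtain rfl | hxy := eq_or_ne x y
  · rfl
  · exact Adj.reachable (Or.inr ((edge_adj ..).mpr ⟨Or.inl ⟨rfl, rfl⟩, hxy⟩))

theorem reachable_sup_edge_iff :
    (H ⊔ edge x y).Reachable a b ↔
      H.Reachable a b ∨ H.Reachable a x ∧ H.Reachable y b ∨
        H.Reachable a y ∧ H.Reachable x b := by
  refine ⟨fun h ↦ ?_, ?_⟩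
  · rw [reachable_iff_reflTransGen] at h
    induction h with
    | refl => exact Or.inl .rfl
    | tail _ hcd ih =>
      rcases hcd with hcd | hcd
      · have extend {w : V} (h : H.Reachable w _) := h.trans hcd.reachable
        exact ih.imp extend (Or.imp (And.imp_right extend) (And.imp_right extend))
      · obtain ⟨⟨rfl, rfl⟩ | ⟨rfl, rfl⟩, -⟩ := (edge_adj ..).mp hcd
        · rcases ih with h | ⟨h, -⟩ | ⟨h, -⟩
          exacts [Or.inr (Or.inl ⟨h, .rfl⟩), Or.inr (Or.inl ⟨h, .rfl⟩), Or.inl h]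
        · rcases ih with h | ⟨h, -⟩ | ⟨h, -⟩
          exacts [Or.inr (Or.inr ⟨h, .rfl⟩), Or.inl h, Or.inr (Or.inr ⟨h, .rfl⟩)]
  · have hle : H ≤ H ⊔ edge x y := le_sup_left
    rintro (h | ⟨hax, hyb⟩ | ⟨hay, hxb⟩)
    · exact h.mono hle
    · exact (hax.mono hle).trans <| reachable_sup_edge.trans (hyb.mono hle)
    · exact (hay.mono hle).trans <| reachable_sup_edge.symm.trans (hxb.mono hle)

lemma deleteEdges_sup_edge_of_ne (G : SimpleGraph V) {e : Sym2 V} (hne : s(x, y) ≠ e) :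
    (G ⊔ edge x y).deleteEdges {e} = G.deleteEdges {e} ⊔ edge x y := by
  rw [deleteEdges_sup, edge, deleteEdges_fromEdgeSet,
    Set.sdiff_singleton_eq_self (Set.mem_singleton_iff.not.mpr hne.symm)]

theorem isBridge_sup_edge_iff_of_ne (G : SimpleGraph V) (hne : s(x, y) ≠ s(u, v)) :
    (G ⊔ edge x y).IsBridge s(u, v) ↔ G.IsBridge s(u, v) ∧
      ¬ ((G.deleteEdges {s(u, v)}).Reachable u x ∧ (G.deleteEdges {s(u, v)}).Reachable v y ∨
        (G.deleteEdges {s(u, v)}).Reachable u y ∧ (G.deleteEdges {s(u, v)}).Reachable v x) := by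
  simp only [isBridge_iff, deleteEdges_sup_edge_of_ne G hne, reachable_sup_edge_iff, not_or,
    reachable_comm (u := y) (v := v), reachable_comm (u := x) (v := v)]

end SimpleGraph

theorem stmt_1_general {V : Type*} (G : SimpleGraph V)
    (u v x y : V) (hb : G.IsBridge s(u, v))
    (hne : s(x, y) ≠ s(u, v)) :
    ¬ (G ⊔ SimpleGraph.fromEdgeSet {s(x, y)}).IsBridge s(u, v) ↔
      (((G.deleteEdges {s(u, v)}).Reachable u x ∧ (G.deleteEdges {s(u, v)}).Reachable v y) ∨
       ((G.deleteEdges {s(u, v)}).Reachable u y ∧ (G.deleteEdges {s(u, v)}).Reachable v x)) := by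
  rw [← SimpleGraph.edge, SimpleGraph.isBridge_sup_edge_iff_of_ne G hne]
  simp only [hb, true_and, not_not]

/-- Let `G` be a finite (connected) simple graph, `e = {u,v}` a bridge of `G`,
and `e' = {x,y}` an edge not in `G` with `e' ≠ e`. Then `e` is a non-bridge of `G + e'`
iff `e'` is a crossing edge of the reachability partition of `e`. -/
theorem stmt_1 {V : Type*} [Fintype V] (G : SimpleGraph V) (hG : G.Connected)
    (u v x y : V) (hb : G.IsBridge s(u, v)) (hxy : x ≠ y)
    (hne : s(x, y) ≠ s(u, v)) (hnotin : s(x, y) ∉ G.edgeSet) :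
    ¬ (G ⊔ SimpleGraph.fromEdgeSet {s(x, y)}).IsBridge s(u, v) ↔
      (((G.deleteEdges {s(u, v)}).Reachable u x ∧ (G.deleteEdges {s(u, v)}).Reachable v y) ∨
       ((G.deleteEdges {s(u, v)}).Reachable u y ∧ (G.deleteEdges {s(u, v)}).Reachable v x)) :=
  stmt_1_general G u v x y hb hne
end

section
/- Let G = (V,E) be an always-connected temporal graph and k ≥ 1. Suppose E is partitioned into sets U and C such that every temporal edge in U is not l-changeable for any l ≤ k, and every temporal edge in C is l'-changeable for some l' ≤ k-1. Then every temporal edge in U is unchangeable: for all r ∈ ℕ, no edge of U is r-changeable. -/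
/-- The `t`-th snapshot of a temporal graph with temporal edge set `E`. -/
def snapshot {V : Type*} (E : Finset (Sym2 V × ℕ)) (t : ℕ) : SimpleGraph V :=
  SimpleGraph.fromEdgeSet {e | (e, t) ∈ E}

/-- A temporal graph with lifetime `T` is always-connected if every snapshot
`G(t)`, `t ∈ [T]`, is connected. -/
def AlwaysConnected {V : Type*} (T : ℕ) (E : Finset (Sym2 V × ℕ)) : Prop :=
  ∀ t ∈ Finset.Icc 1 T, (snapshot E t).Connected

/-- One edge-relabeling step: some temporal edge `(e,t) ∈ E` is replaced by `(e,t')`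
with `t' ≠ t`, where `(e,t') ∉ E`. -/
def Step {V : Type*} [DecidableEq V] (T : ℕ) (E E' : Finset (Sym2 V × ℕ)) : Prop :=
  ∃ (e : Sym2 V) (t t' : ℕ), t ∈ Finset.Icc 1 T ∧ t' ∈ Finset.Icc 1 T ∧ t ≠ t' ∧
    (e, t) ∈ E ∧ (e, t') ∉ E ∧ E' = insert (e, t') (E.erase (e, t))

/-- A valid reconfiguration sequence of length `k`: each graph is obtained from the
previous by one edge relabeling, and every intermediate graph is always-connected. -/
def ValidSeq {V : Type*} [DecidableEq V] (T : ℕ) (f : ℕ → Finset (Sym2 V × ℕ)) (k : ℕ) : Prop :=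
  (∀ i ≤ k, AlwaysConnected T (f i)) ∧ ∀ i < k, Step T (f i) (f (i + 1))

/-- `(e,t)` can be made a non-bridge by some valid reconfiguration sequence of length `k`. -/
def ChangeableIn {V : Type*} [DecidableEq V] (T : ℕ) (E : Finset (Sym2 V × ℕ))
    (e : Sym2 V) (t : ℕ) (k : ℕ) : Prop :=
  ∃ f : ℕ → Finset (Sym2 V × ℕ), f 0 = E ∧ ValidSeq T f k ∧
    (e, t) ∈ f k ∧ ¬ (snapshot (f k) t).IsBridge e

/-- `(e,t)` is `k`-changeable: `k` is the minimum length of a valid reconfiguration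
sequence turning it into a non-bridge. -/
def KChangeable {V : Type*} [DecidableEq V] (T : ℕ) (E : Finset (Sym2 V × ℕ))
    (e : Sym2 V) (t : ℕ) (k : ℕ) : Prop :=
  ChangeableIn T E e t k ∧ ∀ l < k, ¬ ChangeableIn T E e t l

/-!
Let `(s(a, b), t) ∈ E` be a bridge of `G(t)`. Deleting it splits `G(t)` into the side of `a` and
the side of `b`; call an edge crossing if it joins the two sides. While no crossing edge is present
at time `t` the sides do not change and `s(a, b)` stays a bridge. So the first step of a
reconfiguration sequence that brings a crossing edge to time `t` makes `s(a, b)` a non-bridge, and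
it takes that edge from a time where it was a non-bridge. Conversely, once a crossing edge is a
non-bridge somewhere, one more step moving it to `t` makes `s(a, b)` a non-bridge. Hence if
`(s(a, b), t)` is `n`-changeable with `n ≥ 1`, the cheapest crossing temporal edge is
`(n - 1)`-changeable; it lies in `E`, because an edge outside `E` has to be moved in from a
position that is cheaper to change. By induction on `n`, an `(n + 1)`-changeable edge of `U` with
`n ≥ k` would yield an `n`-changeable edge of `E`, which can be neither in `C` nor in `U`.
-/

open SimpleGraph Finset

theorem Nat.exists_lt_not_and_succ {p : ℕ → Prop} {n : ℕ} (h0 : ¬ p 0) (hn : p n) :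
    ∃ i < n, ¬ p i ∧ p (i + 1) := by
  induction n with
  | zero => exact absurd hn h0
  | succ m ih =>
    by_cases hm : p m
    · obtain ⟨i, hi, h⟩ := ih hm
      exact ⟨i, by omega, h⟩
    · exact ⟨m, by omega, hm, hn⟩

namespace SimpleGraph

variable {V : Type*} {G H : SimpleGraph V} {a b : V}

theorem not_isBridge_of_preconnected_deleteEdges {c : Sym2 V}
    (h : (G.deleteEdges {c}).Preconnected) : ¬ G.IsBridge c := by
  induction c using Sym2.ind with
  | _ x y => exact fun hb => isBridge_iff.1 hb (h x y)

theorem Preconnected.reachable_deleteEdges_or (hG : G.Preconnected) (a b v : V) :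
    (G.deleteEdges {s(a, b)}).Reachable a v ∨ (G.deleteEdges {s(a, b)}).Reachable b v := by
  set R := (G.deleteEdges {s(a, b)}).Reachable
  by_contra! h
  obtain ⟨p⟩ := hG a v
  obtain ⟨d, -, hx, hy⟩ :=
    p.exists_boundary_dart {u | R a u ∨ R b u} (Or.inl .rfl) (not_or.2 h)
  apply hy
  by_cases he : s(d.fst, d.snd) = s(a, b)
  · rcases Sym2.eq_iff.1 he with ⟨-, hb⟩ | ⟨-, ha⟩
    · exact Or.inr (hb ▸ .rfl)
    · exact Or.inl (ha ▸ .rfl)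
  · have hadj : (G.deleteEdges {s(a, b)}).Adj d.fst d.snd := by simp [d.adj, he]
    exact hx.imp (·.trans hadj.reachable) (·.trans hadj.reachable)

def IsCrossing (G : SimpleGraph V) (a b : V) (c : Sym2 V) : Prop :=
  c ≠ s(a, b) ∧ ∃ x y, c = s(x, y) ∧ (G.deleteEdges {s(a, b)}).Reachable a x ∧
    (G.deleteEdges {s(a, b)}).Reachable b y

theorem IsCrossing.swap {c : Sym2 V} (h : G.IsCrossing a b c) : G.IsCrossing b a c := by
  obtain ⟨hne, x, y, rfl, hx, hy⟩ := h
  rw [IsCrossing, Sym2.eq_swap (a := b)]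
  exact ⟨hne, y, x, Sym2.eq_swap, hy, hx⟩

theorem reachable_of_forall_not_isCrossing (hG : G.Preconnected)
    (hH : ∀ x y, H.Adj x y → ¬ G.IsCrossing a b s(x, y)) {v : V}
    (hv : (H.deleteEdges {s(a, b)}).Reachable a v) : (G.deleteEdges {s(a, b)}).Reachable a v := by
  by_contra hv'
  obtain ⟨p⟩ := hv
  obtain ⟨d, -, hx, hy⟩ :=
    p.exists_boundary_dart {u | (G.deleteEdges {s(a, b)}).Reachable a u} .rfl hv'
  have hadj := d.adj
  rw [deleteEdges_adj, Set.mem_singleton_iff] at hadj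
  exact hH _ _ hadj.1
    ⟨hadj.2, _, _, rfl, hx, (hG.reachable_deleteEdges_or a b d.snd).resolve_left hy⟩

theorem reachable_deleteEdges_iff_of_forall_not_isCrossing (hG : G.Preconnected)
    (hb : G.IsBridge s(a, b)) (hH : H.Preconnected)
    (hno : ∀ x y, H.Adj x y → ¬ G.IsCrossing a b s(x, y)) (v : V) :
    (H.deleteEdges {s(a, b)}).Reachable a v ↔ (G.deleteEdges {s(a, b)}).Reachable a v := by
  refine ⟨reachable_of_forall_not_isCrossing hG hno, fun hv => ?_⟩
  refine (hH.reachable_deleteEdges_or a b v).resolve_right fun hbv => isBridge_iff.1 hb ?_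
  have hbv' := reachable_of_forall_not_isCrossing (a := b) (b := a) (v := v) hG
    (fun x y hxy hc => hno x y hxy hc.swap) (by rwa [Sym2.eq_swap])
  rw [Sym2.eq_swap] at hbv'
  exact hv.trans hbv'.symm

end SimpleGraph

section Snapshot

variable {V : Type*} {t : ℕ} {X : Finset (Sym2 V × ℕ)} {x y : V} {c : Sym2 V}

theorem snapshot_adj : (snapshot X t).Adj x y ↔ (s(x, y), t) ∈ X ∧ x ≠ y := by
  simp [snapshot]

theorem deleteEdges_snapshot_of_notMem (h : (c, t) ∉ X) :
    (snapshot X t).deleteEdges {c} = snapshot X t := by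
  ext x y
  simp only [deleteEdges_adj, snapshot_adj, Set.mem_singleton_iff]
  exact ⟨fun h' => h'.1, fun h' => ⟨h', fun hc => h (hc ▸ h'.1)⟩⟩

theorem reachable_deleteEdges_snapshot_of_mem {q : Sym2 V} (h : (s(x, y), t) ∈ X)
    (hne : s(x, y) ≠ q) : ((snapshot X t).deleteEdges {q}).Reachable x y := by
  rcases eq_or_ne x y with rfl | hxy
  · rfl
  · exact Adj.reachable (by simp [snapshot_adj, h, hxy, hne])

end Snapshot

section Temporal

variable {V : Type*} [DecidableEq V] {T n t τ σ : ℕ} {E X X' : Finset (Sym2 V × ℕ)}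
  {f : ℕ → Finset (Sym2 V × ℕ)} {a b : V} {c e : Sym2 V}

def relabel (X : Finset (Sym2 V × ℕ)) (c : Sym2 V) (τ σ : ℕ) : Finset (Sym2 V × ℕ) :=
  insert (c, σ) (X.erase (c, τ))

theorem snapshot_relabel_of_ne (hτ : t ≠ τ) (hσ : t ≠ σ) :
    snapshot (relabel X c τ σ) t = snapshot X t := by
  ext x y
  simp [snapshot_adj, relabel, hτ, hσ]

theorem snapshot_relabel_source (h : τ ≠ σ) :
    snapshot (relabel X c τ σ) τ = (snapshot X τ).deleteEdges {c} := by
  ext x y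
  simp only [snapshot_adj, deleteEdges_adj, relabel, mem_insert, mem_erase, ne_eq, Prod.mk.injEq, h,
    Set.mem_singleton_iff]
  tauto

theorem snapshot_le_relabel_target (h : τ ≠ σ) : snapshot X σ ≤ snapshot (relabel X c τ σ) σ := by
  intro x y
  simp only [snapshot_adj, relabel, mem_insert, mem_erase, ne_eq, Prod.mk.injEq, Ne.symm h]
  tauto

theorem AlwaysConnected.relabel (hX : AlwaysConnected T X) (hne : τ ≠ σ)
    (hc : ¬ (snapshot X τ).IsBridge c) : AlwaysConnected T (relabel X c τ σ) := by
  intro u hu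
  rcases eq_or_ne u τ with rfl | huτ
  · rw [snapshot_relabel_source hne]
    induction c using Sym2.ind with
    | _ x y => exact (hX u hu).connected_delete_edge_of_not_isBridge hc
  rcases eq_or_ne u σ with rfl | huσ
  · exact (hX u hu).mono (snapshot_le_relabel_target hne)
  · rw [snapshot_relabel_of_ne huτ huσ]
    exact hX u hu

theorem Step.exists_relabel_of_mem (h : Step T X X') (h' : (c, σ) ∈ X') (hX : (c, σ) ∉ X) :
    ∃ τ ∈ Icc 1 T, τ ≠ σ ∧ (c, τ) ∈ X ∧ X' = relabel X c τ σ := by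
  obtain ⟨d, τ, σ', hτ, -, hne, hd, -, rfl⟩ := h
  obtain ⟨rfl, rfl⟩ : c = d ∧ σ = σ' := by
    simp only [mem_insert, mem_erase, Prod.mk.injEq] at h'
    tauto
  exact ⟨τ, hτ, hne, hd, rfl⟩

theorem ValidSeq.mono {m : ℕ} (h : ValidSeq T f n) (hm : m ≤ n) : ValidSeq T f m :=
  ⟨fun i hi => h.1 i (hi.trans hm), fun i hi => h.2 i (hi.trans_le hm)⟩

theorem ValidSeq.exists_snoc (h : ValidSeq T f n) (hX : AlwaysConnected T X)
    (hs : Step T (f n) X) : ∃ g, g 0 = f 0 ∧ ValidSeq T g (n + 1) ∧ g (n + 1) = X := by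
  refine ⟨fun i => if i ≤ n then f i else X, by simp, ⟨fun i hi => ?_, fun i hi => ?_⟩, by simp⟩
  · by_cases hin : i ≤ n
    · simpa [hin] using h.1 i hin
    · simpa [hin] using hX
  · rcases Nat.lt_succ_iff_lt_or_eq.1 hi with hi | rfl
    · simpa [hi.le, Nat.succ_le_of_lt hi] using h.2 i hi
    · simpa using hs

theorem ValidSeq.snapshot_eq_of_notMem_Icc (h : ValidSeq T f n) (ht : t ∉ Icc 1 T) :
    ∀ i ≤ n, snapshot (f i) t = snapshot (f 0) t := by
  intro i hi
  induction i with
  | zero => rfl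
  | succ i ih =>
    obtain ⟨c, τ, σ, hτ, hσ, -, -, -, hstep⟩ := h.2 i (by omega)
    rw [hstep, ← ih (by omega)]
    exact snapshot_relabel_of_ne (by rintro rfl; exact ht hτ) (by rintro rfl; exact ht hσ)

theorem ValidSeq.changeableIn {i : ℕ} (hf0 : f 0 = E) (h : ValidSeq T f n) (hi : i ≤ n)
    (hm : (e, t) ∈ f i) (hb : ¬ (snapshot (f i) t).IsBridge e) : ChangeableIn T E e t i :=
  ⟨f, hf0, h.mono hi, hm, hb⟩

theorem ValidSeq.changeableIn_of_mem_succ {i : ℕ} (hf0 : f 0 = E) (h : ValidSeq T f n)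
    (hi : i < n) (hc : (c, σ) ∈ f (i + 1)) (hc' : (c, σ) ∉ f i) :
    ∃ τ ∈ Icc 1 T, τ ≠ σ ∧ ChangeableIn T E c τ i ∧ f (i + 1) = relabel (f i) c τ σ := by
  obtain ⟨τ, hτ, hne, hmem, hstep⟩ := (h.2 i hi).exists_relabel_of_mem hc hc'
  have hsrc : ¬ (snapshot (f i) τ).IsBridge c := by
    apply not_isBridge_of_preconnected_deleteEdges
    rw [← snapshot_relabel_source hne, ← hstep]
    exact (h.1 (i + 1) hi τ hτ).preconnected
  exact ⟨τ, hτ, hne, h.changeableIn hf0 hi.le hmem hsrc, hstep⟩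

theorem changeableIn_zero (hE : AlwaysConnected T E) (he : (e, t) ∈ E)
    (hb : ¬ (snapshot E t).IsBridge e) : ChangeableIn T E e t 0 :=
  ⟨fun _ => E, rfl, ⟨fun _ _ => hE, fun i hi => absurd hi (Nat.not_lt_zero i)⟩, he, hb⟩

theorem ChangeableIn.mem_Icc_of_isBridge (h : ChangeableIn T E e t n)
    (hb : (snapshot E t).IsBridge e) : t ∈ Icc 1 T := by
  obtain ⟨f, hf0, hv, -, hnb⟩ := h
  by_contra ht
  rw [hv.snapshot_eq_of_notMem_Icc ht n le_rfl, hf0] at hnb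
  exact hnb hb

theorem ChangeableIn.exists_lt_of_notMem (h : ChangeableIn T E c σ n) (hc : (c, σ) ∉ E) :
    ∃ τ ∈ Icc 1 T, ∃ l < n, ChangeableIn T E c τ l := by
  obtain ⟨f, hf0, hv, hmem, -⟩ := h
  obtain ⟨i, hi, hi', hi1⟩ :=
    Nat.exists_lt_not_and_succ (p := fun i => (c, σ) ∈ f i) (by simpa [hf0]) hmem
  obtain ⟨τ, hτ, -, hch, -⟩ := hv.changeableIn_of_mem_succ hf0 hi hi1 hi'
  exact ⟨τ, hτ, i, hi, hch⟩

theorem KChangeable.unique {m : ℕ} (h₁ : KChangeable T E e t m) (h₂ : KChangeable T E e t n) :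
    m = n :=
  le_antisymm (not_lt.1 fun h => h₁.2 n h h₂.1) (not_lt.1 fun h => h₂.2 m h h₁.1)

theorem ValidSeq.exists_changeableIn_of_isCrossing (hE : AlwaysConnected T E)
    (ht : t ∈ Icc 1 T) (hb : (snapshot E t).IsBridge s(a, b)) (hf0 : f 0 = E)
    (hv : ValidSeq T f n) (hn : ∃ c, (snapshot E t).IsCrossing a b c ∧ (c, t) ∈ f n) :
    ∃ i < n, (∃ c, (snapshot E t).IsCrossing a b c ∧ ∃ τ ∈ Icc 1 T, ChangeableIn T E c τ i) ∧
      ChangeableIn T E s(a, b) t (i + 1) := by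
  set S := snapshot E t
  have h0 : ¬ ∃ c, S.IsCrossing a b c ∧ (c, t) ∈ f 0 := by
    rintro ⟨_, ⟨hne, x, y, rfl, hx, hy⟩, hc⟩
    exact isBridge_iff.1 hb
      (hx.trans ((reachable_deleteEdges_snapshot_of_mem (hf0 ▸ hc) hne).trans hy.symm))
  obtain ⟨i, hi, hno, c, hc, hct⟩ :=
    Nat.exists_lt_not_and_succ (p := fun i => ∃ c, S.IsCrossing a b c ∧ (c, t) ∈ f i) h0 hn
  obtain ⟨τ, hτ, hτt, hch, hstep⟩ :=
    hv.changeableIn_of_mem_succ hf0 hi hct fun h => hno ⟨c, hc, h⟩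
  refine ⟨i, hi, ⟨c, hc, τ, hτ, hch⟩, ?_⟩
  set H := snapshot (f i) t
  have hH : H.Preconnected := (hv.1 i hi.le t ht).preconnected
  have hside := reachable_deleteEdges_iff_of_forall_not_isCrossing (hE t ht).preconnected hb hH
    fun x y hxy hcr => hno ⟨_, hcr, (snapshot_adj.1 hxy).1⟩
  have hqi : (s(a, b), t) ∈ f i := by
    by_contra hq
    exact isBridge_iff.1 hb ((hside b).1 (deleteEdges_snapshot_of_notMem hq ▸ hH a b))
  obtain ⟨hcq, x, y, rfl, hx, hy⟩ := hc
  have hle : H.deleteEdges {s(a, b)} ≤ (snapshot (f (i + 1)) t).deleteEdges {s(a, b)} :=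
    deleteEdges_mono (hstep ▸ snapshot_le_relabel_target hτt)
  -- `y` lies on the side of `b` in `H`, as on the side of `a` it would join `a` to `b` in `S`
  have hby : (H.deleteEdges {s(a, b)}).Reachable b y :=
    (hH.reachable_deleteEdges_or a b y).resolve_left
      fun hay => isBridge_iff.1 hb (((hside y).1 hay).trans hy.symm)
  refine hv.changeableIn hf0 hi ?_ fun hb' => isBridge_iff.1 hb' ?_
  · rw [hstep]
    simp [relabel, hqi, Ne.symm hτt]
  · exact ((((hside x).2 hx).mono hle).trans
      (reachable_deleteEdges_snapshot_of_mem hct hcq)).trans (hby.mono hle).symm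

theorem ChangeableIn.exists_isCrossing (hE : AlwaysConnected T E) (ht : t ∈ Icc 1 T)
    (hb : (snapshot E t).IsBridge s(a, b)) (h : ChangeableIn T E s(a, b) t n) :
    ∃ c, (snapshot E t).IsCrossing a b c ∧ ∃ τ ∈ Icc 1 T, ∃ l < n, ChangeableIn T E c τ l := by
  obtain ⟨f, hf0, hv, -, hnb⟩ := h
  have hn : ∃ c, (snapshot E t).IsCrossing a b c ∧ (c, t) ∈ f n := by
    by_contra! hno
    refine hnb fun hr => isBridge_iff.1 hb ?_
    exact reachable_of_forall_not_isCrossing (hE t ht).preconnected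
      (fun x y hxy hc => hno _ hc (snapshot_adj.1 hxy).1) hr
  obtain ⟨i, hi, ⟨c, hc, τ, hτ, hch⟩, -⟩ := hv.exists_changeableIn_of_isCrossing hE ht hb hf0 hn
  exact ⟨c, hc, τ, hτ, i, hi, hch⟩

theorem ChangeableIn.exists_le_succ_of_isCrossing {m : ℕ} (hE : AlwaysConnected T E)
    (ht : t ∈ Icc 1 T) (hb : (snapshot E t).IsBridge s(a, b))
    (hc : (snapshot E t).IsCrossing a b c) (hσ : σ ∈ Icc 1 T) (h : ChangeableIn T E c σ m) :
    ∃ i ≤ m + 1, ChangeableIn T E s(a, b) t i := by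
  obtain ⟨g, hg0, hv, hmem, hnb⟩ := h
  by_cases hP : ∃ c', (snapshot E t).IsCrossing a b c' ∧ (c', t) ∈ g m
  · obtain ⟨i, hi, -, hch⟩ := hv.exists_changeableIn_of_isCrossing hE ht hb hg0 hP
    exact ⟨i + 1, by omega, hch⟩
  have hct : (c, t) ∉ g m := fun h => hP ⟨c, hc, h⟩
  have hσt : σ ≠ t := by
    rintro rfl
    exact hct hmem
  obtain ⟨g', hg'0, hv', hg'⟩ := hv.exists_snoc ((hv.1 m le_rfl).relabel hσt hnb)
    ⟨c, σ, t, hσ, ht, hσt, hmem, hct, rfl⟩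
  obtain ⟨i, hi, -, hch⟩ := hv'.exists_changeableIn_of_isCrossing hE ht hb (hg'0.trans hg0)
    ⟨c, hc, by simp [hg', relabel]⟩
  exact ⟨i + 1, hi, hch⟩

theorem KChangeable.exists_mem_kChangeable_sub_one (hE : AlwaysConnected T E) (he : (e, t) ∈ E)
    (h : KChangeable T E e t n) (hn : n ≠ 0) : ∃ p ∈ E, KChangeable T E p.1 p.2 (n - 1) := by
  classical
  have hb : (snapshot E t).IsBridge e := by
    by_contra hb
    exact h.2 0 (Nat.pos_of_ne_zero hn) (changeableIn_zero hE he hb)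
  have ht : t ∈ Icc 1 T := h.1.mem_Icc_of_isBridge hb
  induction e using Sym2.ind with | _ a b => ?_
  obtain ⟨c, hc, σ, hσ, l, hl, hcl⟩ := h.1.exists_isCrossing hE ht hb
  have hP : ∃ l, ∃ c, (snapshot E t).IsCrossing a b c ∧ ∃ σ ∈ Icc 1 T, ChangeableIn T E c σ l :=
    ⟨l, c, hc, σ, hσ, hcl⟩
  obtain ⟨c₀, hc₀, σ₀, hσ₀, hM⟩ := Nat.find_spec hP
  have hmin : ∀ l < Nat.find hP, ¬ ChangeableIn T E c₀ σ₀ l :=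
    fun l hl hl' => Nat.find_min hP hl ⟨c₀, hc₀, σ₀, hσ₀, hl'⟩
  have hMn : Nat.find hP = n - 1 := by
    have hle : Nat.find hP ≤ l := Nat.find_min' hP ⟨c, hc, σ, hσ, hcl⟩
    obtain ⟨i, hi, hch⟩ := hM.exists_le_succ_of_isCrossing hE ht hb hc₀ hσ₀
    have hni : n ≤ i := not_lt.1 fun hin => h.2 i hin hch
    omega
  have hmem : (c₀, σ₀) ∈ E := by
    by_contra hnot
    obtain ⟨τ, hτ, l', hl', hch⟩ := hM.exists_lt_of_notMem hnot
    exact Nat.find_min hP hl' ⟨c₀, hc₀, τ, hτ, hch⟩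
  exact ⟨(c₀, σ₀), hmem, hMn ▸ ⟨hM, hmin⟩⟩

end Temporal

theorem stmt_7_general {V : Type*} [DecidableEq V] (T : ℕ)
    (E U C : Finset (Sym2 V × ℕ)) (hE : AlwaysConnected T E) (k : ℕ) (hk : 1 ≤ k)
    (hpart : U ∪ C = E)
    (hU : ∀ p ∈ U, ∀ l ≤ k, ¬ KChangeable T E p.1 p.2 l)
    (hC : ∀ p ∈ C, ∃ l ≤ k - 1, KChangeable T E p.1 p.2 l) :
    ∀ p ∈ U, ∀ r : ℕ, ¬ KChangeable T E p.1 p.2 r := by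
  intro p hp r
  induction r generalizing p with
  | zero => exact hU p hp 0 k.zero_le
  | succ r ih =>
    intro hr
    by_cases hrk : r + 1 ≤ k
    · exact hU p hp _ hrk hr
    obtain ⟨p', hp'E, hp'⟩ :=
      hr.exists_mem_kChangeable_sub_one hE (hpart ▸ mem_union_left C hp) r.succ_ne_zero
    rcases mem_union.1 (hpart ▸ hp'E) with hp'U | hp'C
    · exact ih p' hp'U hp'
    · obtain ⟨l, hl, hl'⟩ := hC p' hp'C
      have hlr : l = r := hl'.unique hp'
      omega

/-- Continuity of Changeable Edges: If, for some `k ≥ 1`, the temporal edge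
set `E` of an always-connected temporal graph is partitioned into `U` and `C` such that
every edge of `U` is not `l`-changeable for any `l ≤ k` and every edge of `C` is
`l'`-changeable for some `l' ≤ k - 1`, then every edge of `U` is unchangeable. -/
theorem stmt_7 {V : Type*} [Fintype V] [DecidableEq V] (T : ℕ)
    (E U C : Finset (Sym2 V × ℕ)) (hE : AlwaysConnected T E) (k : ℕ) (hk : 1 ≤ k)
    (hpart : U ∪ C = E) (hdisj : Disjoint U C)
    (hU : ∀ p ∈ U, ∀ l ≤ k, ¬ KChangeable T E p.1 p.2 l)
    (hC : ∀ p ∈ C, ∃ l ≤ k - 1, KChangeable T E p.1 p.2 l) :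
    ∀ p ∈ U, ∀ r : ℕ, ¬ KChangeable T E p.1 p.2 r :=
  stmt_7_general T E U C hE k hk hpart hU hC
end

section
/- If a temporal edge (e,t) of an always-connected temporal graph G is unchangeable, then (e,t) is a bridge in every temporal graph reachable from G by a valid reconfiguration sequence; consequently, if (e,t) ∈ E(G₁) \ E(G₂) is unchangeable in G₁, there is no valid reconfiguration sequence from G₁ to G₂. -/
/-! Induction along the sequence: while `(e,t)` is present, unchangeability makes it a bridge
of its snapshot, and relabeling a bridge would disconnect `G(t)`, so the next step cannot
move it. -/

lemma SimpleGraph.IsBridge.not_connected_deleteEdges {V : Type*} {G : SimpleGraph V} {e : Sym2 V}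
    (he : G.IsBridge e) : ¬ (G.deleteEdges {e}).Connected := by
  induction e with
  | h u v => exact fun hG => he (hG.preconnected u v)

lemma snapshot_insert_erase {V : Type*} [DecidableEq V] (E : Finset (Sym2 V × ℕ))
    (e : Sym2 V) {t t' : ℕ} (htt' : t ≠ t') :
    snapshot (insert (e, t') (E.erase (e, t))) t = (snapshot E t).deleteEdges {e} := by
  ext a b
  simp only [snapshot, SimpleGraph.deleteEdges, SimpleGraph.sdiff_adj,
    SimpleGraph.fromEdgeSet_adj, Set.mem_ofPred_eq, Set.mem_singleton_iff, Finset.mem_insert,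
    Finset.mem_erase, Prod.mk.injEq]
  grind

lemma ValidSeq.of_le {V : Type*} [DecidableEq V] {T : ℕ} {f : ℕ → Finset (Sym2 V × ℕ)}
    {k l : ℕ} (hf : ValidSeq T f k) (hlk : l ≤ k) : ValidSeq T f l :=
  ⟨fun i hi => hf.1 i (hi.trans hlk), fun i hi => hf.2 i (hi.trans_le hlk)⟩

lemma Step.mem_of_isBridge {V : Type*} [DecidableEq V] {T : ℕ} {E E' : Finset (Sym2 V × ℕ)}
    (hstep : Step T E E') (hE' : AlwaysConnected T E') {e : Sym2 V} {t : ℕ} (he : (e, t) ∈ E)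
    (hbridge : (snapshot E t).IsBridge e) : (e, t) ∈ E' := by
  obtain ⟨e₀, t₀, t', ht₀, -, htt', -, -, rfl⟩ := hstep
  by_cases hmoved : (e₀, t₀) = (e, t)
  · obtain ⟨rfl, rfl⟩ := Prod.mk.inj hmoved
    have hconn := hE' t₀ ht₀
    rw [snapshot_insert_erase E e₀ htt'] at hconn
    exact absurd hconn hbridge.not_connected_deleteEdges
  · exact Finset.mem_insert_of_mem (Finset.mem_erase.mpr ⟨Ne.symm hmoved, he⟩)

lemma mem_and_isBridge_of_validSeq {V : Type*} [DecidableEq V] {T : ℕ}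
    {E : Finset (Sym2 V × ℕ)} {e : Sym2 V} {t : ℕ} (he : (e, t) ∈ E)
    (hunch : ∀ k : ℕ, ¬ ChangeableIn T E e t k) {f : ℕ → Finset (Sym2 V × ℕ)} (hf₀ : f 0 = E) :
    ∀ k, ValidSeq T f k → (e, t) ∈ f k ∧ (snapshot (f k) t).IsBridge e := by
  have isBridge_of_mem {k : ℕ} (hf : ValidSeq T f k) (hmem : (e, t) ∈ f k) :
      (snapshot (f k) t).IsBridge e :=
    not_not.mp fun hnot => hunch k ⟨f, hf₀, hf, hmem, hnot⟩
  intro k hf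
  induction k with
  | zero => exact ⟨hf₀ ▸ he, isBridge_of_mem hf (hf₀ ▸ he)⟩
  | succ k ih =>
    obtain ⟨hmem, hbridge⟩ := ih (hf.of_le k.le_succ)
    have hmem' := (hf.2 k k.lt_succ_self).mem_of_isBridge (hf.1 (k + 1) le_rfl) hmem hbridge
    exact ⟨hmem', isBridge_of_mem hf hmem'⟩

theorem stmt_9_general {V : Type*} [DecidableEq V] (T : ℕ)
    (E₁ E₂ : Finset (Sym2 V × ℕ))
    (e : Sym2 V) (t : ℕ) (he : (e, t) ∈ E₁)
    (hunch : ∀ k : ℕ, ¬ ChangeableIn T E₁ e t k) :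
    (∀ (f : ℕ → Finset (Sym2 V × ℕ)) (k : ℕ), f 0 = E₁ → ValidSeq T f k →
        (e, t) ∈ f k ∧ (snapshot (f k) t).IsBridge e) ∧
    ((e, t) ∉ E₂ →
      ¬ ∃ (f : ℕ → Finset (Sym2 V × ℕ)) (k : ℕ), f 0 = E₁ ∧ f k = E₂ ∧ ValidSeq T f k) := by
  have hreach (f : ℕ → Finset (Sym2 V × ℕ)) (k : ℕ) (hf₀ : f 0 = E₁) (hf : ValidSeq T f k) :=
    mem_and_isBridge_of_validSeq he hunch hf₀ k hf
  exact ⟨hreach, fun hnot ⟨f, k, hf₀, hfk, hf⟩ => hnot (hfk ▸ (hreach f k hf₀ hf).1)⟩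

/-- If a temporal edge `(e,t)` of an always-connected temporal graph `E₁` is
unchangeable (not `k`-changeable for any `k`), then in every temporal graph reachable
from `E₁` by a valid reconfiguration sequence, `(e,t)` is still present and a bridge of
its snapshot; consequently, if `(e,t) ∈ E₁ \ E₂`, there is no valid reconfiguration
sequence from `E₁` to `E₂`. -/
theorem stmt_9 {V : Type*} [Fintype V] [DecidableEq V] (T : ℕ)
    (E₁ E₂ : Finset (Sym2 V × ℕ)) (hE₁ : AlwaysConnected T E₁) (hE₂ : AlwaysConnected T E₂)
    (e : Sym2 V) (t : ℕ) (he : (e, t) ∈ E₁)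
    (hunch : ∀ k : ℕ, ¬ ChangeableIn T E₁ e t k) :
    (∀ (f : ℕ → Finset (Sym2 V × ℕ)) (k : ℕ), f 0 = E₁ → ValidSeq T f k →
        (e, t) ∈ f k ∧ (snapshot (f k) t).IsBridge e) ∧
    ((e, t) ∉ E₂ →
      ¬ ∃ (f : ℕ → Finset (Sym2 V × ℕ)) (k : ℕ), f 0 = E₁ ∧ f k = E₂ ∧ ValidSeq T f k) :=
  stmt_9_general T E₁ E₂ e t he hunch
end

section
/- Let G and H be finite simple graphs on the same vertex set such that every non-bridge edge of G is also an edge of H, and G is connected. If edge f is a non-bridge of G and f ∈ H, then f is a non-bridge of H. -/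
namespace SimpleGraph

variable {V : Type*} {G : SimpleGraph V}

lemma Walk.IsCycle.not_isBridge_of_mem_edges {u : V} {p : G.Walk u u} (hp : p.IsCycle)
    {e : Sym2 V} (he : e ∈ p.edges) : ¬ G.IsBridge e :=
  fun hb ↦ hb.notMem_edges_of_isCycle hp he

lemma exists_isCycle_mem_edges_of_not_isBridge {e : Sym2 V} (he : e ∈ G.edgeSet)
    (hnb : ¬ G.IsBridge e) : ∃ (u : V) (p : G.Walk u u), p.IsCycle ∧ e ∈ p.edges := by
  simpa [isBridge_iff_forall_cycle_notMem he] using hnb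

end SimpleGraph

theorem stmt_11_general {V : Type*} (G H : SimpleGraph V)
    (hGH : ∀ f ∈ G.edgeSet, ¬ G.IsBridge f → f ∈ H.edgeSet)
    (f : Sym2 V) (hf : f ∈ G.edgeSet) (hnb : ¬ G.IsBridge f) :
    ¬ H.IsBridge f := by
  obtain ⟨u, p, hp, hfp⟩ := SimpleGraph.exists_isCycle_mem_edges_of_not_isBridge hf hnb
  have hpH : ∀ e ∈ p.edges, e ∈ H.edgeSet := fun e he ↦
    hGH e (p.edges_subset_edgeSet he) (hp.not_isBridge_of_mem_edges he)
  exact (hp.transfer hpH).not_isBridge_of_mem_edges (by rwa [SimpleGraph.Walk.edges_transfer])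

/-- Let `G` and `H` be finite simple graphs on the same vertex set such that
every non-bridge edge of `G` is also an edge of `H`, and `G` is connected. If `f` is a
non-bridge edge of `G` and an edge of `H`, then `f` is a non-bridge of `H`. -/
theorem stmt_11 {V : Type*} [Fintype V] (G H : SimpleGraph V) (hG : G.Connected)
    (hGH : ∀ f ∈ G.edgeSet, ¬ G.IsBridge f → f ∈ H.edgeSet)
    (f : Sym2 V) (hf : f ∈ G.edgeSet) (hnb : ¬ G.IsBridge f) (hfH : f ∈ H.edgeSet) :
    ¬ H.IsBridge f :=
  stmt_11_general G H hGH f hf hnb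
end
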